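/- Let ψ = Σ_{i=1}^{d_1} λ_i μ_i ⊗ ν_i be a vector in ℂ^{d_1}⊗ℂ^{d_2} in Schmidt form, i.e., λ_i ≥ 0, {μ_i} an orthonormal family in ℂ^{d_1} and {ν_i} an orthonormal family in ℂ^{d_2}. Then for every unit vector φ ∈ ℂ^{d_1}⊗ℂ^{d_2}, one has ⟨φ, (ψψ*)^{T_A} φ⟩ ≤ max_i λ_i², where ψψ* denotes the rank-one matrix |ψ⟩⟨ψ| and T_A is the partial transpose with respect to the first tensor factor. -/

import Mathlib

/-!
Write `ψ = ∑ᵢ fᵢ ⊗ gᵢ` with `fᵢ = λᵢ μᵢ`, `gᵢ = νᵢ`. Then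
`(ψψ*)^{T_A} = ∑_{a,b} |f̄_a ⊗ g_b⟩⟨f̄_b ⊗ g_a|`, so with `z_{ab} = ⟨f̄_a ⊗ g_b, φ⟩ = λ_a ⟨μ̄_a ⊗ ν_b, φ⟩`
the quadratic form is `∑_{a,b} conj(z_{ab}) z_{ba}`. Swapping `a` and `b` shows this sum is real,
and AM-GM bounds it by `∑_{a,b} |z_{ab}|²`. The vectors `μ̄_a ⊗ ν_b` are orthonormal, so Bessel's
inequality gives `∑_{a,b} |z_{ab}|² ≤ maxᵢ λᵢ² ‖φ‖²`.
-/

open Matrix Finset ComplexOrder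

/-- Partial transpose with respect to the first tensor factor of `ℂ^{d₁} ⊗ ℂ^{d₂}`:
`(X^{T_A})_{(i,j),(k,l)} = X_{(k,j),(i,l)}`. -/
def ptA {d1 d2 : ℕ} (X : Matrix (Fin d1 × Fin d2) (Fin d1 × Fin d2) ℂ) :
    Matrix (Fin d1 × Fin d2) (Fin d1 × Fin d2) ℂ :=
  fun p q => X (q.1, p.2) (p.1, q.2)

namespace EuclideanSpace

variable {𝕜 : Type*} [RCLike 𝕜] {m n : Type*} [Fintype m] [Fintype n]

def conjTmul (u : EuclideanSpace 𝕜 m) (w : EuclideanSpace 𝕜 n) : EuclideanSpace 𝕜 (m × n) :=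
  WithLp.toLp 2 fun x => star (u x.1) * w x.2

theorem inner_conjTmul_conjTmul (u u' : EuclideanSpace 𝕜 m) (w w' : EuclideanSpace 𝕜 n) :
    inner 𝕜 (conjTmul u w) (conjTmul u' w') = inner 𝕜 u' u * inner 𝕜 w w' := by
  simp only [conjTmul, inner_eq_star_dotProduct, dotProduct, Fintype.sum_prod_type, sum_mul_sum,
    Pi.star_apply, star_mul', star_star]
  exact sum_congr rfl fun _ _ => sum_congr rfl fun _ _ => by ring

theorem orthonormal_conjTmul {ι κ : Type*} {u : ι → EuclideanSpace 𝕜 m}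
    {w : κ → EuclideanSpace 𝕜 n} (hu : Orthonormal 𝕜 u) (hw : Orthonormal 𝕜 w) :
    Orthonormal 𝕜 fun i : ι × κ => conjTmul (u i.1) (w i.2) := by
  classical
  rw [orthonormal_iff_ite]
  rintro ⟨i, j⟩ ⟨i', j'⟩
  simp only [inner_conjTmul_conjTmul, orthonormal_iff_ite.mp hu, orthonormal_iff_ite.mp hw,
    ite_zero_mul_ite_zero, one_mul, Prod.mk.injEq, eq_comm]

end EuclideanSpace

theorem Orthonormal.sum_norm_mul_inner_sq_le {𝕜 E ι : Type*} [RCLike 𝕜]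
    [SeminormedAddCommGroup E] [InnerProductSpace 𝕜 E] [Fintype ι] {v : ι → E}
    (hv : Orthonormal 𝕜 v) {w : ι → 𝕜} {M : ℝ} (hM : 0 ≤ M) (hw : ∀ i, ‖w i‖ ^ 2 ≤ M) (x : E) :
    ∑ i, ‖w i * inner 𝕜 (v i) x‖ ^ 2 ≤ M * ‖x‖ ^ 2 :=
  calc ∑ i, ‖w i * inner 𝕜 (v i) x‖ ^ 2 ≤ ∑ i, M * ‖inner 𝕜 (v i) x‖ ^ 2 := by
        gcongr with i
        rw [norm_mul, mul_pow]
        exact mul_le_mul_of_nonneg_right (hw i) (sq_nonneg _)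
    _ ≤ M * ‖x‖ ^ 2 := by
        rw [← mul_sum]
        exact mul_le_mul_of_nonneg_left (hv.sum_inner_products_le x) hM

theorem sum_sum_star_mul_swap_le {ι : Type*} [Fintype ι] (z : ι → ι → ℂ) :
    ∑ a, ∑ b, star (z a b) * z b a ≤ ((∑ a, ∑ b, ‖z a b‖ ^ 2 : ℝ) : ℂ) := by
  set S := ∑ a, ∑ b, star (z a b) * z b a
  have hS : star S = S := by
    simp only [S, star_sum, star_mul', star_star]
    rw [sum_comm]
    exact sum_congr rfl fun _ _ => sum_congr rfl fun _ _ => mul_comm _ _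
  have hre : ∀ a b, (star (z a b) * z b a).re ≤ (‖z a b‖ ^ 2 + ‖z b a‖ ^ 2) / 2 := fun a b =>
    calc (star (z a b) * z b a).re ≤ ‖z a b‖ * ‖z b a‖ := by
          simpa using Complex.re_le_norm (star (z a b) * z b a)
      _ ≤ (‖z a b‖ ^ 2 + ‖z b a‖ ^ 2) / 2 := by linarith [two_mul_le_add_sq ‖z a b‖ ‖z b a‖]
  rw [Complex.le_def, Complex.ofReal_re, Complex.ofReal_im, ← Complex.conj_eq_iff_im]
  refine ⟨?_, hS⟩
  calc S.re = ∑ a, ∑ b, (star (z a b) * z b a).re := by simp only [S, Complex.re_sum]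
    _ ≤ ∑ a, ∑ b, (‖z a b‖ ^ 2 + ‖z b a‖ ^ 2) / 2 := by gcongr with a _ b _; exact hre a b
    _ = ∑ a, ∑ b, ‖z a b‖ ^ 2 := by
        simp only [add_div, sum_add_distrib]
        rw [sum_comm (f := fun a b => ‖z b a‖ ^ 2 / 2)]
        simp only [← sum_add_distrib, add_halves]

theorem ptA_vecMulVec_star {d1 d2 : ℕ} {ι : Type*} [Fintype ι] (f : ι → Fin d1 → ℂ)
    (g : ι → Fin d2 → ℂ) (ψ : Fin d1 × Fin d2 → ℂ) (hψ : ∀ x, ψ x = ∑ i, f i x.1 * g i x.2) :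
    ptA (vecMulVec ψ (star ψ)) = ∑ a, ∑ b,
      vecMulVec (fun x => star (f a x.1) * g b x.2) (star fun x => star (f b x.1) * g a x.2) := by
  ext p q
  simp only [ptA, vecMulVec_apply, hψ, Pi.star_apply, star_sum, sum_mul_sum, Matrix.sum_apply,
    star_mul', star_star]
  rw [sum_comm]
  exact sum_congr rfl fun _ _ => sum_congr rfl fun _ _ => by ring

theorem star_dotProduct_vecMulVec_mulVec {α m : Type*} [CommSemiring α] [StarRing α] [Fintype m]
    (u w φ : m → α) :
    star φ ⬝ᵥ (vecMulVec u (star w) *ᵥ φ) = star (star u ⬝ᵥ φ) * (star w ⬝ᵥ φ) := by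
  simp only [dotProduct, mulVec, vecMulVec_apply, Pi.star_apply, star_sum, star_mul', star_star,
    mul_sum, sum_mul]
  rw [sum_comm]
  exact sum_congr rfl fun _ _ => sum_congr rfl fun _ _ => by ring

theorem quadratic_form_partial_transpose_le_max_schmidt_sq
    {d1 d2 : ℕ} (lam : Fin d1 → ℝ)
    (μ : Fin d1 → EuclideanSpace ℂ (Fin d1)) (hμ : Orthonormal ℂ μ)
    (ν : Fin d1 → EuclideanSpace ℂ (Fin d2)) (hν : Orthonormal ℂ ν)
    (ψ : Fin d1 × Fin d2 → ℂ)
    (hψ : ∀ x, ψ x = ∑ i, (lam i : ℂ) * μ i x.1 * ν i x.2)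
    (φ : Fin d1 × Fin d2 → ℂ) (hφ : ∑ x, Complex.normSq (φ x) = 1) :
    star φ ⬝ᵥ ((ptA (Matrix.vecMulVec ψ (star ψ))) *ᵥ φ)
      ≤ ((⨆ i, lam i ^ 2 : ℝ) : ℂ) := by
  set M := ⨆ i, lam i ^ 2
  have hM : ∀ i, ‖(lam i : ℂ)‖ ^ 2 ≤ M := fun i => by
    simpa using le_ciSup (Finite.bddAbove_range fun i => lam i ^ 2) i
  have hM₀ : 0 ≤ M := Real.iSup_nonneg fun i => sq_nonneg (lam i)
  set Φ : EuclideanSpace ℂ (Fin d1 × Fin d2) := WithLp.toLp 2 φ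
  have hΦ : ‖Φ‖ ^ 2 = 1 := by simpa [Φ, EuclideanSpace.norm_sq_eq, Complex.sq_norm] using hφ
  set f : Fin d1 → Fin d1 → ℂ := fun i k => lam i * μ i k
  set z := fun a b => star (fun x : Fin d1 × Fin d2 => star (f a x.1) * ν b x.2) ⬝ᵥ φ
  have hz : ∀ a b, z a b = lam a * inner ℂ (EuclideanSpace.conjTmul (μ a) (ν b)) Φ := by
    intro a b
    simp only [z, f, Φ, EuclideanSpace.conjTmul, EuclideanSpace.inner_eq_star_dotProduct,
      dotProduct, mul_sum, Pi.star_apply, star_mul', Complex.star_def, Complex.conj_ofReal]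
    exact sum_congr rfl fun _ _ => by ring
  have hBessel := (EuclideanSpace.orthonormal_conjTmul hμ hν).sum_norm_mul_inner_sq_le
    (w := fun i => (lam i.1 : ℂ)) hM₀ (fun i => hM i.1) Φ
  rw [hΦ, mul_one, Fintype.sum_prod_type] at hBessel
  rw [ptA_vecMulVec_star f (fun i k => ν i k) ψ hψ]
  simp only [sum_mulVec, dotProduct_sum, star_dotProduct_vecMulVec_mulVec]
  calc _ ≤ ((∑ a, ∑ b, ‖z a b‖ ^ 2 : ℝ) : ℂ) := sum_sum_star_mul_swap_le z
    _ ≤ M := by simpa only [hz, Complex.real_le_real] using hBessel
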